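/- Fix n ≥ 2, let G be a graph, ω a placement function on G, and f : V(G) → V(C) satisfying (C1) and (C2). Let u_0,…,u_{k₁} and v_0,…,v_{k₂} be wrapping patterns in G, and let p₁ ∈ {0,…,k₁} and p₂ ∈ {0,…,k₂} be such that |p₁ − p₂| < 2(n+1) and f(u_{p₁}) = f(v_{p₂}). Then either ω(u_{p₁}) = ω(v_{p₂}) = o and f(u_{p₁}) = C(·,0), or p₁ = p₂. -/
import Mathlib


/-- Vertices of the infinite n-od graph `C`: a branch vertex, and nodes `C(ℓ,j)`
(intended for `1 ≤ ℓ ≤ n`, `j ≥ 1`). -/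
inductive NOdVert : Type where
  | branch : NOdVert
  | node : ℕ → ℕ → NOdVert
deriving DecidableEq

/-- `cv ℓ j` denotes the vertex `C(ℓ,j)`, where `C(ℓ,0)` is the branch vertex. -/
def cv (ℓ j : ℕ) : NOdVert := if j = 0 then NOdVert.branch else NOdVert.node ℓ j

/-- Adjacency in the infinite n-od `C`: `C(ℓ,j)` is adjacent to `C(ℓ,j+1)` for
`1 ≤ ℓ ≤ n` and `j ≥ 0` (the case `j = 0` gives branch–`C(ℓ,1)` edges). -/
def nodAdj (n : ℕ) (u v : NOdVert) : Prop :=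
  ∃ ℓ j, 1 ≤ ℓ ∧ ℓ ≤ n ∧
    ((u = cv ℓ j ∧ v = cv ℓ (j + 1)) ∨ (v = cv ℓ j ∧ u = cv ℓ (j + 1)))

/-- The point `b(i,t) = ((1+t)cos(iπ/n), (1+t)sin(iπ/n))` in the plane. -/
noncomputable def bpt (n i : ℕ) (t : ℝ) : ℝ × ℝ :=
  ((1 + t) * Real.cos (i * Real.pi / n), (1 + t) * Real.sin (i * Real.pi / n))

/-- The origin `o` of the plane. -/
def origin : ℝ × ℝ := (0, 0)

/-- A placement function: on each edge of `G`, one endpoint maps to `o` and the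
other to some `b(i,t)` with `i ∈ {0,…,n}`, `t ∈ [0,1]`. -/
def IsPlacement {V : Type*} (n : ℕ) (G : SimpleGraph V) (ω : V → ℝ × ℝ) : Prop :=
  ∀ u v, G.Adj u v →
    (ω u = origin ∧ ∃ i ≤ n, ∃ t ∈ Set.Icc (0 : ℝ) 1, ω v = bpt n i t) ∨
    (ω v = origin ∧ ∃ i ≤ n, ∃ t ∈ Set.Icc (0 : ℝ) 1, ω u = bpt n i t)

/-- Condition (C1). -/
def CondC1 {V : Type*} (n : ℕ) (ω : V → ℝ × ℝ) (f : V → NOdVert) : Prop :=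
  ∀ u v, f u = f v →
    (ω u = origin ∧ ω v = origin) ∨
    ∃ i ≤ n, ∃ s ∈ Set.Icc (0 : ℝ) 1, ∃ t ∈ Set.Icc (0 : ℝ) 1,
      ω u = bpt n i s ∧ ω v = bpt n i t

/-- Condition (C2): `f` maps adjacent vertices of `G` to adjacent vertices of `C`. -/
def CondC2 {V : Type*} (n : ℕ) (G : SimpleGraph V) (f : V → NOdVert) : Prop :=
  ∀ u v, G.Adj u v → nodAdj n (f u) (f v)

/-- `w 0, …, w k` is a wrapping pattern in `G` for the placement function `ω`. -/
def IsWrapping {V : Type*} (n : ℕ) (G : SimpleGraph V) (ω : V → ℝ × ℝ)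
    (w : ℕ → V) (k : ℕ) : Prop :=
  0 < k ∧ 2 * (n + 1) ∣ k ∧
  (∀ p < k, G.Adj (w p) (w (p + 1))) ∧
  (∀ q, 2 * q ≤ k → ∃ t ∈ Set.Icc (0 : ℝ) 1, ω (w (2 * q)) = bpt n (q % (n + 1)) t) ∧
  (∀ q, 2 * q + 1 ≤ k → ω (w (2 * q + 1)) = origin)

/-- The branch-star of `C`: the branch vertex together with `C(ℓ,1)`, `1 ≤ ℓ ≤ n`. -/
def branchStar (n : ℕ) : Set NOdVert :=
  {NOdVert.branch} ∪ {x | ∃ ℓ, 1 ≤ ℓ ∧ ℓ ≤ n ∧ x = NOdVert.node ℓ 1}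

section Aux

open Real Set

lemma bpt_ne_origin {n i : ℕ} {t : ℝ} (ht : 0 ≤ t) : bpt n i t ≠ origin := by
  intro h
  have h1 : (1 + t) * Real.cos (i * Real.pi / n) = 0 := congrArg Prod.fst h
  have h2 : (1 + t) * Real.sin (i * Real.pi / n) = 0 := congrArg Prod.snd h
  have hpos : (0:ℝ) < 1 + t := by linarith
  have hc : Real.cos (i * Real.pi / n) = 0 := by
    rcases mul_eq_zero.1 h1 with h | h
    · linarith
    · exact h
  have hs : Real.sin (i * Real.pi / n) = 0 := by
    rcases mul_eq_zero.1 h2 with h | h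
    · linarith
    · exact h
  have := Real.sin_sq_add_cos_sq (i * Real.pi / n)
  rw [hs, hc] at this
  norm_num at this

lemma spoke_eq {n i i' : ℕ} (hn : 1 ≤ n) (hi : i ≤ n) (hi' : i' ≤ n)
    {s s' : ℝ} (hs : s ∈ Set.Icc (0:ℝ) 1) (hs' : s' ∈ Set.Icc (0:ℝ) 1)
    (h : bpt n i s = bpt n i' s') : i = i' := by
  have h1 : (1 + s) * Real.cos (i * Real.pi / n) = (1 + s') * Real.cos (i' * Real.pi / n) :=
    congrArg Prod.fst h
  have h2 : (1 + s) * Real.sin (i * Real.pi / n) = (1 + s') * Real.sin (i' * Real.pi / n) :=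
    congrArg Prod.snd h
  have hp1 := Real.sin_sq_add_cos_sq (i * Real.pi / n)
  have hp2 := Real.sin_sq_add_cos_sq (i' * Real.pi / n)
  have hsq : (1 + s)^2 = (1 + s')^2 := by
    have e1 : ((1+s) * Real.cos (i * Real.pi / n))^2
        = ((1+s') * Real.cos (i' * Real.pi / n))^2 := by rw [h1]
    have e2 : ((1+s) * Real.sin (i * Real.pi / n))^2
        = ((1+s') * Real.sin (i' * Real.pi / n))^2 := by rw [h2]
    calc (1+s)^2 = ((1+s) * Real.sin (i * Real.pi / n))^2
          + ((1+s) * Real.cos (i * Real.pi / n))^2 := by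
            rw [mul_pow, mul_pow, ← mul_add, hp1, mul_one]
      _ = ((1+s') * Real.sin (i' * Real.pi / n))^2
          + ((1+s') * Real.cos (i' * Real.pi / n))^2 := by rw [e1, e2]
      _ = (1+s')^2 := by rw [mul_pow, mul_pow, ← mul_add, hp2, mul_one]
  have hss' : s = s' := by
    have h0 : (s - s') * (2 + s + s') = 0 := by linear_combination hsq
    rcases mul_eq_zero.1 h0 with h0 | h0
    · linarith
    · linarith [hs.1, hs'.1]
  subst hss'
  have hpos : (0:ℝ) < 1 + s := by linarith [hs.1]
  have hc : Real.cos (i * Real.pi / n) = Real.cos (i' * Real.pi / n) :=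
    mul_left_cancel₀ (ne_of_gt hpos) h1
  have hnpos : (0:ℝ) < n := by exact_mod_cast hn
  have hmem : ∀ m : ℕ, m ≤ n → (m : ℝ) * Real.pi / n ∈ Set.Icc 0 Real.pi := by
    intro m hm
    constructor
    · positivity
    · rw [div_le_iff₀ hnpos]
      have : (m:ℝ) ≤ n := by exact_mod_cast hm
      nlinarith [Real.pi_pos]
  have hcos := Real.injOn_cos (hmem i hi) (hmem i' hi') hc
  have hne : (n:ℝ) ≠ 0 := ne_of_gt hnpos
  have hπ : Real.pi ≠ 0 := ne_of_gt Real.pi_pos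
  have hmul : (i:ℝ) * Real.pi = (i':ℝ) * Real.pi := by
    have := congrArg (fun x : ℝ => x * n) hcos
    simpa [div_mul_cancel₀, hne] using this
  have : (i:ℝ) = (i':ℝ) := mul_right_cancel₀ hπ hmul
  exact_mod_cast this

lemma mod_eq_close {m q₁ q₂ : ℕ} (h : q₁ % m = q₂ % m)
    (hd : q₁ < q₂ + m) (hd' : q₂ < q₁ + m) : q₁ = q₂ := by
  have hdvd : (m:ℤ) ∣ (q₂:ℤ) - q₁ := (Nat.modEq_iff_dvd (n := m)).1 h
  have := Int.eq_zero_of_abs_lt_dvd hdvd (by rw [abs_lt]; omega)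
  omega

lemma nodAdj_symm {n : ℕ} {x y : NOdVert} (h : nodAdj n x y) : nodAdj n y x := by
  obtain ⟨ℓ, j, h1, h2, h3⟩ := h
  exact ⟨ℓ, j, h1, h2, h3.symm⟩

lemma nodAdj_node {n ℓ j : ℕ} {y : NOdVert} (h : nodAdj n (NOdVert.node ℓ j) y) :
    y = cv ℓ (j - 1) ∨ y = NOdVert.node ℓ (j + 1) := by
  obtain ⟨ℓ', j', -, -, h3⟩ := h
  rcases h3 with ⟨hx, hy⟩ | ⟨hy, hx⟩
  · by_cases hj' : j' = 0
    · simp [cv, hj'] at hx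
    · simp [cv, hj'] at hx
      obtain ⟨rfl, rfl⟩ := hx
      right
      rw [hy]
      simp [cv]
  · simp [cv] at hx
    obtain ⟨rfl, rfl⟩ := hx
    left
    rw [hy]
    congr 1

lemma common_spoke {V : Type*} {n : ℕ} (hn : 1 ≤ n) {ω : V → ℝ × ℝ} {f : V → NOdVert}
    (h1 : CondC1 n ω f) {x y : V} {a b : ℕ} {ta tb : ℝ}
    (hf : f x = f y) (ha : a ≤ n) (hb : b ≤ n)
    (hta : ta ∈ Set.Icc (0:ℝ) 1) (htb : tb ∈ Set.Icc (0:ℝ) 1)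
    (hx : ω x = bpt n a ta) (hy : ω y = bpt n b tb) : a = b := by
  rcases h1 x y hf with ⟨ho, _⟩ | ⟨i, hi, s, hsI, t, htI, hxs, hyt⟩
  · exact absurd (hx ▸ ho) (bpt_ne_origin hta.1)
  · have e1 : a = i := spoke_eq hn ha hi hta hsI (hx ▸ hxs)
    have e2 : b = i := spoke_eq hn hb hi htb htI (hy ▸ hyt)
    omega

end Aux


theorem stmt9 {V : Type*} (n : ℕ) (hn : 2 ≤ n) (G : SimpleGraph V)
    (ω : V → ℝ × ℝ) (hω : IsPlacement n G ω)
    (f : V → NOdVert) (h1 : CondC1 n ω f) (h2 : CondC2 n G f)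
    (u v : ℕ → V) (k₁ k₂ : ℕ)
    (hu : IsWrapping n G ω u k₁) (hv : IsWrapping n G ω v k₂)
    (p₁ p₂ : ℕ) (hp₁ : p₁ ≤ k₁) (hp₂ : p₂ ≤ k₂)
    (hclose : |(p₁ : ℤ) - (p₂ : ℤ)| < 2 * (n + 1))
    (heq : f (u p₁) = f (v p₂)) :
    (ω (u p₁) = origin ∧ ω (v p₂) = origin ∧ f (u p₁) = NOdVert.branch) ∨ p₁ = p₂ := by
  obtain ⟨hk₁pos, hk₁dvd, hadju, hevenu, hoddu⟩ := hu
  obtain ⟨hk₂pos, hk₂dvd, hadjv, hevenv, hoddv⟩ := hv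
  have hn1 : 1 ≤ n := by omega
  have h2k₁ : 2 ∣ k₁ := dvd_trans ⟨n + 1, rfl⟩ hk₁dvd
  have h2k₂ : 2 ∣ k₂ := dvd_trans ⟨n + 1, rfl⟩ hk₂dvd
  have hcl : p₁ < p₂ + 2 * (n + 1) ∧ p₂ < p₁ + 2 * (n + 1) := by
    rw [abs_lt] at hclose
    omega
  have hmodle : ∀ q : ℕ, q % (n + 1) ≤ n := fun q => by
    have := Nat.mod_lt q (show 0 < n + 1 by omega); omega
  rcases h1 _ _ heq with ⟨ho1, ho2⟩ | ⟨i, hi, s, hsI, t, htI, hus, hvt⟩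
  · -- both at origin: indices are odd
    have hodd₁ : ¬ (2 ∣ p₁) := by
      rintro ⟨q, rfl⟩
      obtain ⟨t₁, ht₁I, hω₁⟩ := hevenu q (by omega)
      exact bpt_ne_origin ht₁I.1 (hω₁ ▸ ho1)
    have hodd₂ : ¬ (2 ∣ p₂) := by
      rintro ⟨q, rfl⟩
      obtain ⟨t₂, ht₂I, hω₂⟩ := hevenv q (by omega)
      exact bpt_ne_origin ht₂I.1 (hω₂ ▸ ho2)
    obtain ⟨q₁, rfl⟩ : ∃ q, p₁ = 2 * q + 1 := ⟨p₁ / 2, by omega⟩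
    obtain ⟨q₂, rfl⟩ : ∃ q, p₂ = 2 * q + 1 := ⟨p₂ / 2, by omega⟩
    match hfu : f (u (2 * q₁ + 1)) with
    | NOdVert.branch => exact Or.inl ⟨ho1, ho2, rfl⟩
    | NOdVert.node ℓ j =>
      right
      have hfv : f (v (2 * q₂ + 1)) = NOdVert.node ℓ j := heq ▸ hfu
      -- neighbors in walks
      have hAm : nodAdj n (NOdVert.node ℓ j) (f (u (2 * q₁))) := by
        have := h2 _ _ (hadju (2 * q₁) (by omega))
        exact hfu ▸ nodAdj_symm this
      have hAp : nodAdj n (NOdVert.node ℓ j) (f (u (2 * q₁ + 2))) := by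
        have := h2 _ _ (hadju (2 * q₁ + 1) (by omega))
        exact hfu ▸ this
      have hBm : nodAdj n (NOdVert.node ℓ j) (f (v (2 * q₂))) := by
        have := h2 _ _ (hadjv (2 * q₂) (by omega))
        exact hfv ▸ nodAdj_symm this
      have hBp : nodAdj n (NOdVert.node ℓ j) (f (v (2 * q₂ + 2))) := by
        have := h2 _ _ (hadjv (2 * q₂ + 1) (by omega))
        exact hfv ▸ this
      -- ω values at even neighbors
      obtain ⟨ta, htaI, hωa⟩ := hevenu q₁ (by omega)
      obtain ⟨ta', hta'I, hωa'⟩ := hevenu (q₁ + 1) (by omega)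
      obtain ⟨tb, htbI, hωb⟩ := hevenv q₂ (by omega)
      obtain ⟨tb', htb'I, hωb'⟩ := hevenv (q₂ + 1) (by omega)
      rw [show 2 * (q₁ + 1) = 2 * q₁ + 2 by ring] at hωa'
      rw [show 2 * (q₂ + 1) = 2 * q₂ + 2 by ring] at hωb'
      -- the two walk-neighbors of a node have distinct f-images
      have hAne : f (u (2 * q₁)) ≠ f (u (2 * q₁ + 2)) := by
        intro h
        have := common_spoke hn1 h1 h (hmodle q₁) (hmodle (q₁ + 1)) htaI hta'I hωa hωa'
        have := mod_eq_close this (by omega) (by omega)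
        omega
      have hBne : f (v (2 * q₂)) ≠ f (v (2 * q₂ + 2)) := by
        intro h
        have := common_spoke hn1 h1 h (hmodle q₂) (hmodle (q₂ + 1)) htbI htb'I hωb hωb'
        have := mod_eq_close this (by omega) (by omega)
        omega
      by_cases hcase : f (u (2 * q₁ + 2)) = f (v (2 * q₂ + 2))
      · have := common_spoke hn1 h1 hcase (hmodle (q₁ + 1)) (hmodle (q₂ + 1))
          hta'I htb'I hωa' hωb'
        have := mod_eq_close this (by omega) (by omega)
        omega
      · exfalso
        have hAmv := nodAdj_node hAm
        have hApv := nodAdj_node hAp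
        have hBmv := nodAdj_node hBm
        have hBpv := nodAdj_node hBp
        have key : f (u (2 * q₁)) = f (v (2 * q₂ + 2)) ∧
            f (v (2 * q₂)) = f (u (2 * q₁ + 2)) := by
          rcases hApv with h' | h'
          · rcases hBpv with h'' | h''
            · exact absurd (h'.trans h''.symm) hcase
            · constructor
              · rcases hAmv with h | h
                · exact absurd (h.trans h'.symm) hAne
                · rw [h, h'']
              · rcases hBmv with h | h
                · rw [h, h']
                · exact absurd (h.trans h''.symm) hBne
          · rcases hBpv with h'' | h''
            · constructor
              · rcases hAmv with h | h
                · rw [h, h'']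
                · exact absurd (h.trans h'.symm) hAne
              · rcases hBmv with h | h
                · exact absurd (h.trans h''.symm) hBne
                · rw [h, h']
            · exact absurd (h'.trans h''.symm) hcase
        obtain ⟨e1, e2⟩ := key
        have m1 : q₁ % (n + 1) = (q₂ + 1) % (n + 1) :=
          common_spoke hn1 h1 e1 (hmodle q₁) (hmodle (q₂ + 1)) htaI htb'I hωa hωb'
        have m2 : q₂ % (n + 1) = (q₁ + 1) % (n + 1) :=
          common_spoke hn1 h1 e2 (hmodle q₂) (hmodle (q₁ + 1)) htbI hta'I hωb hωa'
        have d1 : ((n + 1 : ℕ) : ℤ) ∣ ((q₂ + 1 : ℕ) : ℤ) - (q₁ : ℕ) :=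
          (Nat.modEq_iff_dvd).1 m1
        have d2 : ((n + 1 : ℕ) : ℤ) ∣ ((q₁ + 1 : ℕ) : ℤ) - (q₂ : ℕ) :=
          (Nat.modEq_iff_dvd).1 m2
        have d3 : ((n + 1 : ℕ) : ℤ) ∣ 2 := by
          have := dvd_add d1 d2
          have he : ((q₂ + 1 : ℕ) : ℤ) - (q₁ : ℕ) + (((q₁ + 1 : ℕ) : ℤ) - (q₂ : ℕ)) = 2 := by
            push_cast; ring
          rwa [he] at this
        have := Int.le_of_dvd (by norm_num) d3
        omega
  · -- both on a spoke: indices are even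
    right
    have heven₁ : 2 ∣ p₁ := by
      by_contra h
      obtain ⟨q, rfl⟩ : ∃ q, p₁ = 2 * q + 1 := ⟨p₁ / 2, by omega⟩
      have := hoddu q (by omega)
      exact bpt_ne_origin hsI.1 (hus.symm.trans this)
    have heven₂ : 2 ∣ p₂ := by
      by_contra h
      obtain ⟨q, rfl⟩ : ∃ q, p₂ = 2 * q + 1 := ⟨p₂ / 2, by omega⟩
      have := hoddv q (by omega)
      exact bpt_ne_origin htI.1 (hvt.symm.trans this)
    obtain ⟨q₁, rfl⟩ := heven₁
    obtain ⟨q₂, rfl⟩ := heven₂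
    obtain ⟨t₁, ht₁I, hω₁⟩ := hevenu q₁ (by omega)
    obtain ⟨t₂, ht₂I, hω₂⟩ := hevenv q₂ (by omega)
    have e1 : q₁ % (n + 1) = i := spoke_eq hn1 (hmodle q₁) hi ht₁I hsI (hω₁.symm.trans hus)
    have e2 : q₂ % (n + 1) = i := spoke_eq hn1 (hmodle q₂) hi ht₂I htI (hω₂.symm.trans hvt)
    have := mod_eq_close (e1.trans e2.symm) (by omega) (by omega)
    omega
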